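/- (Theorem 6, factorization part: closed form for decomposable graphs.) Let G be a decomposable graph on {1,…,p} with edge set E for which the identity ordering is a perfect elimination ordering, and let U be symmetric positive definite. Then c_j > 0 for every 1 ≤ j ≤ p, and for every unit lower triangular p×p matrix L with L_{ij} = 0 whenever i > j and (i,j) ∉ E, and every D = diag(D_1,…,D_p) with D_j > 0, tr(L D L^T U) = ∑_{j=1}^{p} D_j [ (L_{I_j} − e_j)^T U^{≻j} (L_{I_j} − e_j) + c_j ] (terms with N^{≻j} = ∅ being D_j U_{jj}). Consequently, the unnormalized generalized G-Wishart density in Cholesky coordinates factorizes as ∏_{j=1}^{p} D_j^{(δ_j+2ν_j)/2} exp(−(D_j/2)[(L_{I_j} − e_j)^T U^{≻j}(L_{I_j} − e_j) + c_j]), so the pairs (L_{I_j}, D_j) are mutually independent, with L_{I_j} given D_j Gaussian N(e_j, (U^{≻j})^{−1}/D_j) and D_j Gamma with shape (ν_j+δ_j)/2 + 1 and rate c_j/2. -/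

import Mathlib

open SimpleGraph

variable {V : Type*}

/-- One step of the elimination/triangulation process: at step `k` (0-based) the vertex with
label `k` is eliminated, and all pairs of its neighbours with larger labels are joined. -/
def triStep {n : ℕ} (σ : V ≃ Fin n) (H : SimpleGraph V) (k : ℕ) : SimpleGraph V where
  Adj u v := H.Adj u v ∨
    (u ≠ v ∧ ∃ hk : k < n, k < (σ u : ℕ) ∧ k < (σ v : ℕ) ∧
      H.Adj u (σ.symm ⟨k, hk⟩) ∧ H.Adj v (σ.symm ⟨k, hk⟩))
  symm := by
    refine ⟨?_⟩
    rintro u v (h | ⟨hne, hk, h1, h2, h3, h4⟩)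
    · exact Or.inl h.symm
    · exact Or.inr ⟨hne.symm, hk, h2, h1, h4, h3⟩
  loopless := by
    refine ⟨?_⟩
    rintro u (h | ⟨hne, _⟩)
    · exact H.loopless.irrefl u h
    · exact hne rfl

/-- The sequence of graphs `E_0, E_1, …` in the triangulation process. -/
def triSeq {n : ℕ} (σ : V ≃ Fin n) (G : SimpleGraph V) : ℕ → SimpleGraph V
  | 0 => G
  | k + 1 => triStep σ (triSeq σ G k) k

/-- The triangulation `D^σ(G)` of `G` under the ordering `σ` (`p − 2` elimination steps). -/
def triangulation {n : ℕ} (σ : V ≃ Fin n) (G : SimpleGraph V) : SimpleGraph V :=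
  triSeq σ G (n - 2)

/-- `σ` is a perfect elimination ordering of `G`: for every `j`, the vertex `σ⁻¹(j)` together
with its higher-labelled neighbours forms a clique. -/
def IsPerfectElimOrdering {n : ℕ} (σ : V ≃ Fin n) (G : SimpleGraph V) : Prop :=
  ∀ j : Fin n,
    G.IsClique ({σ.symm j} ∪ {v : V | (j : ℕ) < (σ v : ℕ) ∧ G.Adj v (σ.symm j)})

/-- A graph is decomposable (chordal) if it has no induced cycle of length `≥ 4`. -/
def IsDecomposable (G : SimpleGraph V) : Prop :=
  ∀ n : ℕ, 4 ≤ n → IsEmpty (SimpleGraph.cycleGraph n ↪g G)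

/-- `σ` is a Generalized Bartlett ordering of `G`: no triangle of `D^σ(G)` consists of three
non-edges of `G`. -/
def IsGBOrdering {n : ℕ} (σ : V ≃ Fin n) (G : SimpleGraph V) : Prop :=
  ¬ ∃ u v w : V,
      ¬ G.Adj u v ∧ ¬ G.Adj v w ∧ ¬ G.Adj u w ∧
      (triangulation σ G).Adj u v ∧ (triangulation σ G).Adj v w ∧
      (triangulation σ G).Adj u w

/-- `G` is a Generalized Bartlett graph: it admits a Generalized Bartlett ordering. -/
def IsGB (G : SimpleGraph V) : Prop :=
  ∃ (n : ℕ) (σ : V ≃ Fin n), IsGBOrdering σ G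

open Matrix
open scoped Classical BigOperators

/-- `N^{≻j} = {i : i > j, (i,j) ∈ E}`. -/
noncomputable def Nset (p : ℕ) (G : SimpleGraph (Fin p)) (j : Fin p) : Finset (Fin p) :=
  Finset.univ.filter fun i : Fin p => j < i ∧ G.Adj i j

/-- `ν_j = |N^{≻j}|`. -/
noncomputable def nuG (p : ℕ) (G : SimpleGraph (Fin p)) (j : Fin p) : ℕ :=
  (Nset p G j).card

/-- `U^{≻j}`: the principal submatrix of `U` with rows and columns indexed by `N^{≻j}`. -/
noncomputable def Usub (p : ℕ) (G : SimpleGraph (Fin p)) (U : Matrix (Fin p) (Fin p) ℝ)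
    (j : Fin p) : Matrix ↥(Nset p G j) ↥(Nset p G j) ℝ :=
  Matrix.of fun a b => U a.1 b.1

/-- `U^{≻}_{·j} = (U_{ij})_{i ∈ N^{≻j}}`. -/
noncomputable def Uvec (p : ℕ) (G : SimpleGraph (Fin p)) (U : Matrix (Fin p) (Fin p) ℝ)
    (j : Fin p) : ↥(Nset p G j) → ℝ :=
  fun a => U a.1 j

/-- `e_j = −(U^{≻j})⁻¹ U^{≻}_{·j}`. -/
noncomputable def evec (p : ℕ) (G : SimpleGraph (Fin p)) (U : Matrix (Fin p) (Fin p) ℝ)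
    (j : Fin p) : ↥(Nset p G j) → ℝ :=
  -((Usub p G U j)⁻¹ *ᵥ Uvec p G U j)

/-- `c_j = U_{jj} − (U^{≻}_{·j})ᵀ (U^{≻j})⁻¹ U^{≻}_{·j}`. -/
noncomputable def cconst (p : ℕ) (G : SimpleGraph (Fin p)) (U : Matrix (Fin p) (Fin p) ℝ)
    (j : Fin p) : ℝ :=
  U j j - Uvec p G U j ⬝ᵥ ((Usub p G U j)⁻¹ *ᵥ Uvec p G U j)

/-- The quadratic form `(L_{I_j} − e_j)ᵀ U^{≻j} (L_{I_j} − e_j)`, where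
`L_{I_j} = (L_{ij})_{i ∈ N^{≻j}}`. -/
noncomputable def Qform (p : ℕ) (G : SimpleGraph (Fin p)) (U : Matrix (Fin p) (Fin p) ℝ)
    (j : Fin p) (L : Matrix (Fin p) (Fin p) ℝ) : ℝ :=
  (fun a : ↥(Nset p G j) => L a.1 j - evec p G U j a) ⬝ᵥ
    (Usub p G U j *ᵥ fun a : ↥(Nset p G j) => L a.1 j - evec p G U j a)

/-- The unnormalized generalized `G`-Wishart density in Cholesky coordinates `(L, D)`:
`(∏_j D_j^{(δ_j+2ν_j)/2}) · exp(−tr(L D Lᵀ U)/2)`. -/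
noncomputable def piStarLD (p : ℕ) (G : SimpleGraph (Fin p)) (U : Matrix (Fin p) (Fin p) ℝ)
    (δ : Fin p → ℝ) (L : Matrix (Fin p) (Fin p) ℝ) (D : Fin p → ℝ) : ℝ :=
  (∏ j : Fin p, D j ^ ((δ j + 2 * (nuG p G j : ℝ)) / 2)) *
    Real.exp (-(L * Matrix.diagonal D * Lᵀ * U).trace / 2)

/-! Because `L` is unit lower triangular and vanishes off the edges of `G`, its `j`-th column
is `1` at `j`, `L_{I_j}` on `N^{≻j}` and `0` elsewhere. Hence `tr(L D Lᵀ U)` is the sum of the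
`D_j`-weighted values of the quadratic form of `U` at the columns of `L`, and completing the square
in `L_{I_j}` with respect to `U^{≻j}` turns the `j`-th value into
`(L_{I_j} − e_j)ᵀ U^{≻j} (L_{I_j} − e_j) + c_j`. Evaluating at the column with `L_{I_j} = e_j`
shows that `c_j` is a value of the positive definite form `U`, so `c_j > 0`. The exponential of
the sum then factorizes, and each factor `D_j^{(ν_j+δ_j)/2} exp(−c_j D_j / 2)` is an unnormalized
Gamma density. -/

namespace Matrix

variable {ι R : Type*} [Fintype ι] [CommRing R]

theorem IsSymm.dotProduct_mulVec_add_inv_mulVec [DecidableEq ι] {S : Matrix ι ι R}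
    (hS : S.IsSymm) (hdet : IsUnit S.det) (u x : ι → R) :
    (x + S⁻¹ *ᵥ u) ⬝ᵥ (S *ᵥ (x + S⁻¹ *ᵥ u)) - u ⬝ᵥ (S⁻¹ *ᵥ u)
      = x ⬝ᵥ (S *ᵥ x) + 2 * (x ⬝ᵥ u) := by
  have hSw : S *ᵥ (S⁻¹ *ᵥ u) = u := by
    rw [mulVec_mulVec, mul_nonsing_inv _ hdet, one_mulVec]
  have hwS : (S⁻¹ *ᵥ u) ⬝ᵥ (S *ᵥ x) = x ⬝ᵥ u := by
    rw [dotProduct_mulVec, ← mulVec_transpose, hS.eq, hSw, dotProduct_comm]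
  rw [mulVec_add, add_dotProduct, dotProduct_add, dotProduct_add, hSw, hwS,
    dotProduct_comm (S⁻¹ *ᵥ u) u]
  ring

theorem dotProduct_mulVec_eq_sum_sum_of_support {U : Matrix ι ι R} {T : Finset ι}
    {v : ι → R} (hv : ∀ i ∉ T, v i = 0) :
    v ⬝ᵥ (U *ᵥ v) = ∑ i ∈ T, ∑ k ∈ T, v i * U i k * v k := by
  rw [dotProduct, ← Finset.sum_subset (Finset.subset_univ T) fun i _ hi => by simp [hv i hi]]
  refine Finset.sum_congr rfl fun i _ => ?_
  rw [mulVec, dotProduct,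
    ← Finset.sum_subset (Finset.subset_univ T) fun k _ hk => by simp [hv k hk], Finset.mul_sum]
  exact Finset.sum_congr rfl fun k _ => by ring

theorem IsSymm.dotProduct_mulVec_of_support_insert [DecidableEq ι] {U : Matrix ι ι R}
    (hU : U.IsSymm) {s : Finset ι} {j : ι} (hj : j ∉ s) {v : ι → R}
    (hv : ∀ i, i ≠ j → i ∉ s → v i = 0) :
    v ⬝ᵥ (U *ᵥ v) = v j * v j * U j j + 2 * v j * ((fun a : s => v a) ⬝ᵥ fun a => U a j)
      + (fun a : s => v a) ⬝ᵥ (U.submatrix (↑) (↑) *ᵥ fun a : s => v a) := by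
  have hv' : ∀ i ∉ insert j s, v i = 0 := fun i hi =>
    hv i (fun h => hi (h ▸ Finset.mem_insert_self j s)) fun h => hi (Finset.mem_insert_of_mem h)
  have hcol : (fun a : s => v a) ⬝ᵥ (fun a => U a j) = ∑ i ∈ s, v i * U i j :=
    Finset.sum_coe_sort s fun i => v i * U i j
  have hsub : (fun a : s => v a) ⬝ᵥ (U.submatrix (↑) (↑) *ᵥ fun a : s => v a)
      = ∑ i ∈ s, ∑ k ∈ s, v i * U i k * v k := by
    simp only [dotProduct, mulVec, submatrix_apply, Finset.mul_sum, ← Finset.sum_coe_sort s,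
      mul_assoc]
  have hrow : ∑ k ∈ s, v j * U j k * v k = ∑ k ∈ s, v k * U k j * v j :=
    Finset.sum_congr rfl fun k _ => by rw [hU.apply k j]; ring
  rw [hcol, hsub, dotProduct_mulVec_eq_sum_sum_of_support hv', Finset.sum_insert hj,
    Finset.sum_insert hj, Finset.sum_congr rfl fun i _ => Finset.sum_insert hj,
    Finset.sum_add_distrib, hrow, ← Finset.sum_mul]
  ring

theorem trace_mul_diagonal_mul_transpose_mul [DecidableEq ι] (L U : Matrix ι ι R) (D : ι → R) :
    (L * diagonal D * Lᵀ * U).trace = ∑ m, D m * (Lᵀ m ⬝ᵥ (U *ᵥ Lᵀ m)) := by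
  have hLDL (i k : ι) : (L * diagonal D * Lᵀ) i k = ∑ m, L i m * D m * L k m := by
    rw [mul_apply]
    simp only [mul_diagonal, transpose_apply]
  simp only [trace, diag_apply, mul_apply (M := L * diagonal D * Lᵀ), hLDL, dotProduct, mulVec,
    Finset.sum_mul, Finset.mul_sum]
  rw [Finset.sum_congr rfl fun _ _ => Finset.sum_comm, Finset.sum_comm]
  refine Finset.sum_congr rfl fun m _ => ?_
  rw [Finset.sum_comm]
  exact Finset.sum_congr rfl fun k _ => Finset.sum_congr rfl fun i _ => by
    simp only [transpose_apply]
    ring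

end Matrix

open Real in
theorem ProbabilityTheory.rpow_mul_exp_eq_mul_gammaPDFReal {a r x : ℝ} (ha : 0 < a)
    (hr : 0 < r) (hx : 0 ≤ x) :
    x ^ (a - 1) * exp (-(r * x)) = Gamma a / r ^ a * gammaPDFReal a r x := by
  have hΓ : Gamma a ≠ 0 := (Gamma_pos_of_pos ha).ne'
  have hra : r ^ a ≠ 0 := (rpow_pos_of_pos hr a).ne'
  rw [gammaPDFReal, if_pos hx]
  field_simp

open Real ProbabilityTheory in
theorem ProbabilityTheory.rpow_mul_exp_eq_mul_gaussian_mul_gammaPDFReal {ν δ q c x : ℝ} (hx : 0 < x)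
    (hc : 0 < c) (ha : 0 < (ν + δ) / 2 + 1) :
    x ^ ((δ + 2 * ν) / 2) * exp (-(x / 2) * (q + c)) =
      Gamma ((ν + δ) / 2 + 1) / (c / 2) ^ ((ν + δ) / 2 + 1) *
        (x ^ (ν / 2) * exp (-(x / 2) * q)) * gammaPDFReal ((ν + δ) / 2 + 1) (c / 2) x := by
  have hpow : x ^ ((δ + 2 * ν) / 2) = x ^ (ν / 2) * x ^ ((ν + δ) / 2 + 1 - 1) := by
    rw [← rpow_add hx]
    ring_nf
  have hexp : exp (-(x / 2) * (q + c)) = exp (-(x / 2) * q) * exp (-(c / 2 * x)) := by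
    rw [← exp_add]
    ring_nf
  rw [hpow, hexp]
  linear_combination (x ^ (ν / 2) * exp (-(x / 2) * q)) *
    rpow_mul_exp_eq_mul_gammaPDFReal ha (half_pos hc) hx.le

section GWishart

variable {p : ℕ} (G : SimpleGraph (Fin p)) {U : Matrix (Fin p) (Fin p) ℝ}

theorem notMem_Nset_self (j : Fin p) : j ∉ Nset p G j := by
  simp [Nset]

theorem Usub_posDef (hU : U.PosDef) (j : Fin p) : (Usub p G U j).PosDef :=
  hU.submatrix Subtype.val_injective

theorem dotProduct_mulVec_col_eq_Qform_add_cconst (hU : U.PosDef) {j : Fin p}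
    {L : Matrix (Fin p) (Fin p) ℝ} (hjj : L j j = 1)
    (hL : ∀ i, i ≠ j → i ∉ Nset p G j → L i j = 0) :
    Lᵀ j ⬝ᵥ (U *ᵥ Lᵀ j) = Qform p G U j L + cconst p G U j := by
  set x : Nset p G j → ℝ := fun a => L a j
  set S := Usub p G U j
  set u := Uvec p G U j
  have hquad : Lᵀ j ⬝ᵥ (U *ᵥ Lᵀ j) = L j j * L j j * U j j + 2 * L j j * (x ⬝ᵥ u)
      + x ⬝ᵥ (S *ᵥ x) :=
    (isHermitian_iff_isSymm.mp hU.isHermitian).dotProduct_mulVec_of_support_insert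
      (notMem_Nset_self G j) hL
  have hS : S.PosDef := Usub_posDef G hU j
  have hsq := (isHermitian_iff_isSymm.mp hS.isHermitian).dotProduct_mulVec_add_inv_mulVec
    ((isUnit_iff_isUnit_det S).mp hS.isUnit) u x
  have hshift : (fun a => x a - evec p G U j a) = x + S⁻¹ *ᵥ u := by
    ext a
    simp [evec, S, u]
  rw [hquad, hjj, Qform, cconst, hshift]
  linear_combination -hsq

theorem cconst_pos (hU : U.PosDef) (j : Fin p) : 0 < cconst p G U j := by
  let v : Fin p → ℝ := fun i =>
    if h : i ∈ Nset p G j then evec p G U j ⟨i, h⟩ else if i = j then 1 else 0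
  have hvj : v j = 1 := by simp [v, notMem_Nset_self G j]
  have hv : ∀ i, i ≠ j → i ∉ Nset p G j → v i = 0 := fun i hij hi => by simp [v, hi, hij]
  have hQ : Qform p G U j (of fun i _ => v i) = 0 := by simp [Qform, v]
  have hpos := hU.dotProduct_mulVec_pos (x := v) fun h => by simpa [hvj] using congrFun h j
  rw [star_trivial] at hpos
  have hquad : v ⬝ᵥ (U *ᵥ v) = Qform p G U j (of fun i _ => v i) + cconst p G U j :=
    dotProduct_mulVec_col_eq_Qform_add_cconst G hU (L := of fun i _ => v i) hvj hv
  linarith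

theorem trace_eq_sum_Qform_add_cconst (hU : U.PosDef) {L : Matrix (Fin p) (Fin p) ℝ}
    (hdiag : ∀ i, L i i = 1) (hupper : ∀ i j : Fin p, i < j → L i j = 0)
    (hzero : ∀ i j : Fin p, j < i → ¬ G.Adj i j → L i j = 0) (D : Fin p → ℝ) :
    (L * diagonal D * Lᵀ * U).trace = ∑ j, D j * (Qform p G U j L + cconst p G U j) := by
  rw [trace_mul_diagonal_mul_transpose_mul]
  refine Finset.sum_congr rfl fun j _ => ?_
  suffices hL : ∀ i, i ≠ j → i ∉ Nset p G j → L i j = 0 by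
    rw [dotProduct_mulVec_col_eq_Qform_add_cconst G hU (hdiag j) hL]
  intro i hij hi
  rcases hij.lt_or_gt with hlt | hgt
  · exact hupper i j hlt
  · exact hzero i j hgt fun hadj => hi (by simp [Nset, hgt, hadj])

theorem piStarLD_eq_prod (hU : U.PosDef) (δ : Fin p → ℝ) {L : Matrix (Fin p) (Fin p) ℝ}
    (hdiag : ∀ i, L i i = 1) (hupper : ∀ i j : Fin p, i < j → L i j = 0)
    (hzero : ∀ i j : Fin p, j < i → ¬ G.Adj i j → L i j = 0) (D : Fin p → ℝ) :
    piStarLD p G U δ L D = ∏ j, D j ^ ((δ j + 2 * (nuG p G j : ℝ)) / 2) *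
      Real.exp (-(D j / 2) * (Qform p G U j L + cconst p G U j)) := by
  rw [piStarLD, trace_eq_sum_Qform_add_cconst G hU hdiag hupper hzero, neg_div,
    Finset.sum_div, ← Finset.sum_neg_distrib, Real.exp_sum, ← Finset.prod_mul_distrib]
  exact Finset.prod_congr rfl fun j _ => by ring_nf

end GWishart

theorem decomposable_gwishart_factorization_general (p : ℕ) (G : SimpleGraph (Fin p))
    (U : Matrix (Fin p) (Fin p) ℝ) (hU : U.PosDef)
    (δ : Fin p → ℝ) (hδ : ∀ i, 0 < δ i) :
    (∀ j : Fin p, 0 < cconst p G U j) ∧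
    (∀ L : Matrix (Fin p) (Fin p) ℝ,
      (∀ i, L i i = 1) → (∀ i j : Fin p, i < j → L i j = 0) →
      (∀ i j : Fin p, j < i → ¬ G.Adj i j → L i j = 0) →
      ∀ D : Fin p → ℝ, (∀ j, 0 < D j) →
        (L * Matrix.diagonal D * Lᵀ * U).trace =
          ∑ j : Fin p, D j * (Qform p G U j L + cconst p G U j) ∧
        piStarLD p G U δ L D =
          ∏ j : Fin p, D j ^ ((δ j + 2 * (nuG p G j : ℝ)) / 2) *
            Real.exp (-(D j / 2) * (Qform p G U j L + cconst p G U j))) ∧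
    (∃ K : Fin p → ℝ, (∀ j, 0 < K j) ∧
      ∀ L : Matrix (Fin p) (Fin p) ℝ,
        (∀ i, L i i = 1) → (∀ i j : Fin p, i < j → L i j = 0) →
        (∀ i j : Fin p, j < i → ¬ G.Adj i j → L i j = 0) →
        ∀ D : Fin p → ℝ, (∀ j, 0 < D j) →
          piStarLD p G U δ L D =
            ∏ j : Fin p,
              K j *
                (D j ^ ((nuG p G j : ℝ) / 2) *
                  Real.exp (-(D j / 2) * Qform p G U j L)) *
                ProbabilityTheory.gammaPDFReal (((nuG p G j : ℝ) + δ j) / 2 + 1)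
                  (cconst p G U j / 2) (D j)) := by
  have ha (j : Fin p) : 0 < ((nuG p G j : ℝ) + δ j) / 2 + 1 := by
    linarith [hδ j, (nuG p G j).cast_nonneg (α := ℝ)]
  have hc := cconst_pos G hU
  refine ⟨hc, fun L hdiag hupper hzero D _ => ⟨?_, ?_⟩, ⟨fun j =>
    Real.Gamma (((nuG p G j : ℝ) + δ j) / 2 + 1) /
      (cconst p G U j / 2) ^ (((nuG p G j : ℝ) + δ j) / 2 + 1), fun j => ?_, ?_⟩⟩
  · exact trace_eq_sum_Qform_add_cconst G hU hdiag hupper hzero D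
  · exact piStarLD_eq_prod G hU δ hdiag hupper hzero D
  · exact div_pos (Real.Gamma_pos_of_pos (ha j)) (Real.rpow_pos_of_pos (half_pos (hc j)) _)
  · intro L hdiag hupper hzero D hD
    rw [piStarLD_eq_prod G hU δ hdiag hupper hzero D]
    exact Finset.prod_congr rfl fun j _ =>
      ProbabilityTheory.rpow_mul_exp_eq_mul_gaussian_mul_gammaPDFReal (hD j) (hc j) (ha j)

/-- Theorem 6, factorization part: for a decomposable graph with the identity
ordering a perfect elimination ordering and `U` positive definite, all `c_j > 0`; the trace
decomposes as `tr(L D Lᵀ U) = ∑_j D_j [(L_{I_j}−e_j)ᵀ U^{≻j} (L_{I_j}−e_j) + c_j]`; hence the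
generalized `G`-Wishart density factorizes over `j` into a product of a Gaussian kernel in
`L_{I_j}` given `D_j` (mean `e_j`, covariance `(U^{≻j})⁻¹/D_j`) and a Gamma kernel in `D_j`
with shape `(ν_j+δ_j)/2 + 1` and rate `c_j/2`, so the pairs `(L_{I_j}, D_j)` are mutually
independent. -/
theorem decomposable_gwishart_factorization (p : ℕ) (G : SimpleGraph (Fin p))
    (hdec : IsDecomposable G)
    (hPEO : IsPerfectElimOrdering (Equiv.refl (Fin p)) G)
    (U : Matrix (Fin p) (Fin p) ℝ) (hU : U.PosDef)
    (δ : Fin p → ℝ) (hδ : ∀ i, 0 < δ i) :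
    (∀ j : Fin p, 0 < cconst p G U j) ∧
    (∀ L : Matrix (Fin p) (Fin p) ℝ,
      (∀ i, L i i = 1) → (∀ i j : Fin p, i < j → L i j = 0) →
      (∀ i j : Fin p, j < i → ¬ G.Adj i j → L i j = 0) →
      ∀ D : Fin p → ℝ, (∀ j, 0 < D j) →
        (L * Matrix.diagonal D * Lᵀ * U).trace =
          ∑ j : Fin p, D j * (Qform p G U j L + cconst p G U j) ∧
        piStarLD p G U δ L D =
          ∏ j : Fin p, D j ^ ((δ j + 2 * (nuG p G j : ℝ)) / 2) *
            Real.exp (-(D j / 2) * (Qform p G U j L + cconst p G U j))) ∧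
    (∃ K : Fin p → ℝ, (∀ j, 0 < K j) ∧
      ∀ L : Matrix (Fin p) (Fin p) ℝ,
        (∀ i, L i i = 1) → (∀ i j : Fin p, i < j → L i j = 0) →
        (∀ i j : Fin p, j < i → ¬ G.Adj i j → L i j = 0) →
        ∀ D : Fin p → ℝ, (∀ j, 0 < D j) →
          piStarLD p G U δ L D =
            ∏ j : Fin p,
              K j *
                (D j ^ ((nuG p G j : ℝ) / 2) *
                  Real.exp (-(D j / 2) * Qform p G U j L)) *
                ProbabilityTheory.gammaPDFReal (((nuG p G j : ℝ) + δ j) / 2 + 1)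
                  (cconst p G U j / 2) (D j)) :=
  decomposable_gwishart_factorization_general p G U hU δ hδ
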